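/- arXiv:1609.09672 — 2 statements merged into one kernel-verified Lean document; each statement's English description precedes it below -/
import Mathlib

section
/- If every chain in the sequence a_1, …, a_r has at most c elements, then r ≤ ξ·c. -/
/-!
Let `g i + 1` be the length of a longest chain starting at `a_i` (Mirsky's height function).
Prepending `a_i` to a chain starting at `a_k` shows that `g` strictly decreases along every
forward edge `i < k`, `E (a i) (a k)`; by symmetry of `E` each level set of `g` is therefore
pairwise unrelated, so has at most `ξ` elements, and `g` takes at most `c` values.
-/

section ChainHeight

variable {α : Type*} (R : α → α → Prop)

def chainTailLengths (x : α) : Set ℕ :=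
  {n | ∃ l : List α, (x :: l).IsChain R ∧ l.length = n}

noncomputable def chainHeight (x : α) : ℕ :=
  sSup (chainTailLengths R x)

variable {R} {c : ℕ}

theorem bddAbove_chainTailLengths (hc : ∀ l : List α, l.IsChain R → l.length ≤ c) (x : α) :
    BddAbove (chainTailLengths R x) :=
  ⟨c, fun _ ⟨l, hl, hn⟩ => hn ▸ (by simpa using hc _ hl : l.length < c).le⟩

theorem exists_isChain_cons_length_eq_chainHeight
    (hc : ∀ l : List α, l.IsChain R → l.length ≤ c) (x : α) :
    ∃ l : List α, (x :: l).IsChain R ∧ l.length = chainHeight R x :=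
  Nat.sSup_mem (s := chainTailLengths R x) ⟨0, [], .singleton x, rfl⟩
    (bddAbove_chainTailLengths hc x)

theorem chainHeight_lt (hc : ∀ l : List α, l.IsChain R → l.length ≤ c) (x : α) :
    chainHeight R x < c := by
  obtain ⟨l, hl, hn⟩ := exists_isChain_cons_length_eq_chainHeight hc x
  simpa [hn] using hc _ hl

theorem chainHeight_lt_of_rel (hc : ∀ l : List α, l.IsChain R → l.length ≤ c) {x y : α}
    (h : R x y) : chainHeight R y < chainHeight R x := by
  obtain ⟨l, hl, hn⟩ := exists_isChain_cons_length_eq_chainHeight hc y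
  exact Nat.lt_of_succ_le <|
    le_csSup (bddAbove_chainTailLengths hc x) ⟨y :: l, .cons_cons h hl, by simp [hn]⟩

theorem card_le_mul_of_isChain_length_le [Fintype α] {ξ : ℕ}
    (hc : ∀ l : List α, l.IsChain R → l.length ≤ c)
    (hfree : ∀ s : Finset α, (∀ x ∈ s, ∀ y ∈ s, ¬ R x y) → s.card ≤ ξ) :
    Fintype.card α ≤ ξ * c := by
  have hmaps : ∀ x ∈ (Finset.univ : Finset α), chainHeight R x ∈ Finset.range c :=
    fun x _ => Finset.mem_range.mpr (chainHeight_lt hc x)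
  have hlevel :
      ∀ n ∈ Finset.range c, (Finset.univ.filter fun x => chainHeight R x = n).card ≤ ξ := by
    intro n _
    refine hfree _ fun x hx y hy hxy => ?_
    simp only [Finset.mem_filter] at hx hy
    exact (chainHeight_lt_of_rel hc hxy).ne (hy.2.trans hx.2.symm)
  simpa using Finset.card_le_mul_card_image_of_maps_to hmaps ξ hlevel

end ChainHeight

theorem chain_bound_general {V : Type*} (E : V → V → Prop) (hsymm : ∀ x y, E x y → E y x)
    (r ξ c : ℕ) (a : Fin r → V)
    (hchain : ∀ s : ℕ, ∀ j : Fin s → Fin r, StrictMono j →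
      (∀ i : Fin s, ∀ h : (i : ℕ) + 1 < s, E (a (j i)) (a (j ⟨(i : ℕ) + 1, h⟩))) → s ≤ c)
    (hfree : ∀ T : Finset (Fin r),
      (∀ i ∈ T, ∀ j ∈ T, i ≠ j → ¬ E (a i) (a j)) → T.card ≤ ξ) :
    r ≤ ξ * c := by
  let R : Fin r → Fin r → Prop := fun i k => i < k ∧ E (a i) (a k)
  have hc : ∀ l : List (Fin r), l.IsChain R → l.length ≤ c := by
    intro l hl
    have hsorted : l.SortedLT := List.sortedLT_iff_isChain.mpr (hl.imp fun _ _ => And.left)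
    exact hchain l.length l.get hsorted fun i h => (hl.getElem i h).2
  have hR : ∀ T : Finset (Fin r), (∀ i ∈ T, ∀ k ∈ T, ¬ R i k) → T.card ≤ ξ := by
    refine fun T hT => hfree T fun i hi k hk hik hE => ?_
    rcases hik.lt_or_gt with h | h
    · exact hT i hi k hk ⟨h, hE⟩
    · exact hT k hk i hi ⟨h, hsymm _ _ hE⟩
  simpa using card_le_mul_of_isChain_length_le hc hR

/-- **Chain bound.** If `a : Fin r → V` is an injective sequence, `E` is a symmetric
relation ("essential intersection"), every chain (strictly increasing subsequence with
consecutive members related by `E`) has at most `c` elements, and every `E`-free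
(pairwise non-related) subset of indices has cardinality at most `ξ`, then `r ≤ ξ * c`. -/
theorem chain_bound {V : Type*} (E : V → V → Prop) (hsymm : ∀ x y, E x y → E y x)
    (r ξ c : ℕ) (a : Fin r → V) (hinj : Function.Injective a)
    (hchain : ∀ s : ℕ, ∀ j : Fin s → Fin r, StrictMono j →
      (∀ i : Fin s, ∀ h : (i : ℕ) + 1 < s, E (a (j i)) (a (j ⟨(i : ℕ) + 1, h⟩))) → s ≤ c)
    (hfree : ∀ T : Finset (Fin r),
      (∀ i ∈ T, ∀ j ∈ T, i ≠ j → ¬ E (a i) (a j)) → T.card ≤ ξ) :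
    r ≤ ξ * c :=
  chain_bound_general E hsymm r ξ c a hchain hfree
end

section
/- For every real Q ≥ 1 there exists a constant R₀ ≥ 0, depending only on Q, with the following property: for all integers a ≤ b ≤ c and every function f from the integers to the reals satisfying |s−t|/Q − Q ≤ |f(s) − f(t)| ≤ Q·|s−t| + Q for all integers s, t with a ≤ s ≤ t ≤ c, one has |f(a) − f(b)| + |f(b) − f(c)| ≤ |f(a) − f(c)| + R₀. -/
private lemma quasi_upper_aux (Q : ℝ) (hQ : 1 ≤ Q) (a b c : ℤ) (hab : a ≤ b) (hbc : b ≤ c)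
    (f : ℤ → ℝ)
    (hf : ∀ s t : ℤ, a ≤ s → s ≤ t → t ≤ c →
          |(s : ℝ) - (t : ℝ)| / Q - Q ≤ |f s - f t| ∧
          |f s - f t| ≤ Q * |(s : ℝ) - (t : ℝ)| + Q) :
    f b ≤ max (f a) (f c) + (10 * Q ^ 3 + 6 * Q) := by
  classical
  by_contra hcon
  push_neg at hcon
  have hQ0 : (0 : ℝ) < Q := by linarith
  have hQ3 : (0 : ℝ) < Q ^ 3 := by positivity
  set M := max (f a) (f c) with hM
  set v := M + (5 * Q ^ 3 + 3 * Q) with hv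
  have hfav : f a ≤ v := by
    have := le_max_left (f a) (f c); simp only [hv]; nlinarith
  have hfcv : f c ≤ v := by
    have := le_max_right (f a) (f c); simp only [hv]; nlinarith
  have hfbv : v + (5 * Q ^ 3 + 3 * Q) < f b := by simp only [hv]; nlinarith
  -- step bound
  have step : ∀ s : ℤ, a ≤ s → s + 1 ≤ c → |f s - f (s + 1)| ≤ 2 * Q := by
    intro s hs hsc
    have h := (hf s (s + 1) hs (by linarith) hsc).2
    have hcast : |(s : ℝ) - ((s + 1 : ℤ) : ℝ)| = 1 := by push_cast; simp
    rw [hcast] at h; linarith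
  -- greatest s in [a,b] with f s ≤ v
  obtain ⟨s, ⟨hsa, hsb, hsv⟩, hsmax⟩ :=
    Int.exists_greatest_of_bdd (P := fun z => a ≤ z ∧ z ≤ b ∧ f z ≤ v)
      ⟨b, fun z hz => hz.2.1⟩ ⟨a, le_refl a, hab, hfav⟩
  have hsltb : s < b := by
    rcases lt_or_eq_of_le hsb with h | h
    · exact h
    · exfalso; rw [h] at hsv; nlinarith
  have hub : s + 1 ≤ b := hsltb
  have hugt : v < f (s + 1) := by
    by_contra h'
    push_neg at h'
    have := hsmax (s + 1) ⟨by linarith, hub, h'⟩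
    omega
  have hule : f (s + 1) ≤ v + 2 * Q := by
    have := abs_le.mp (step s hsa (by linarith))
    linarith [this.1]
  -- least t in [b,c] with f t ≤ v
  obtain ⟨t, ⟨htb, htc, htv⟩, htmin⟩ :=
    Int.exists_least_of_bdd (P := fun z => b ≤ z ∧ z ≤ c ∧ f z ≤ v)
      ⟨b, fun z hz => hz.1⟩ ⟨c, hbc, le_refl c, hfcv⟩
  have hbltt : b < t := by
    rcases lt_or_eq_of_le htb with h | h
    · exact h
    · exfalso; rw [← h] at htv; nlinarith
  have htgt : v < f (t - 1) := by
    by_contra h'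
    push_neg at h'
    have := htmin (t - 1) ⟨by omega, by omega, h'⟩
    omega
  have htge : v - 2 * Q ≤ f t := by
    have hstep := step (t - 1) (by omega) (by omega)
    have heq : t - 1 + 1 = t := by omega
    rw [heq] at hstep
    have := abs_le.mp hstep
    linarith [this.2]
  -- distance bound between s+1 and t
  have hs1t : s + 1 ≤ t := by omega
  have hlow := (hf (s + 1) t (by linarith) hs1t htc).1
  have habs1 : |((s + 1 : ℤ) : ℝ) - (t : ℝ)| = (t : ℝ) - ((s + 1 : ℤ) : ℝ) := by
    rw [abs_of_nonpos (by exact_mod_cast sub_nonpos.mpr (Int.cast_le.mpr hs1t)), neg_sub]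
  have hsmall : |f (s + 1) - f t| ≤ 4 * Q := by
    rw [abs_le]; constructor <;> nlinarith
  rw [habs1] at hlow
  have hdist : (t : ℝ) - ((s + 1 : ℤ) : ℝ) ≤ 5 * Q * Q := by
    have h5 : ((t : ℝ) - ((s + 1 : ℤ) : ℝ)) / Q ≤ 5 * Q := by linarith
    have := (div_le_iff₀ hQ0).mp h5
    linarith
  -- now compare f(s+1) with f b
  have hbd := (hf (s + 1) b (by linarith) hub hbc).2
  have habs2 : |((s + 1 : ℤ) : ℝ) - (b : ℝ)| = (b : ℝ) - ((s + 1 : ℤ) : ℝ) := by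
    rw [abs_of_nonpos (by exact_mod_cast sub_nonpos.mpr (Int.cast_le.mpr hub)), neg_sub]
  rw [habs2] at hbd
  have hbt : (b : ℝ) ≤ (t : ℝ) := by exact_mod_cast le_of_lt hbltt
  have hbu : (b : ℝ) - ((s + 1 : ℤ) : ℝ) ≤ 5 * Q * Q := by linarith
  have hA : f b - f (s + 1) ≤ |f (s + 1) - f b| := by
    rw [abs_sub_comm]; exact le_abs_self _
  have hnn : (0 : ℝ) ≤ (b : ℝ) - ((s + 1 : ℤ) : ℝ) := by
    exact_mod_cast sub_nonneg.mpr (Int.cast_le.mpr hub)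
  nlinarith

/-- **Reverse triangle inequality for quasigeodesics in ℤ-like spaces.**
For every `Q ≥ 1` there is `R₀ ≥ 0`, depending only on `Q`, such that for all integers
`a ≤ b ≤ c` and every `f : ℤ → ℝ` which is a `Q`-quasigeodesic on `[a,c]`
(i.e. `|s−t|/Q − Q ≤ |f s − f t| ≤ Q·|s−t| + Q` for `a ≤ s ≤ t ≤ c`), one has
`|f a − f b| + |f b − f c| ≤ |f a − f c| + R₀`. -/
theorem reverse_triangle_quasigeodesic (Q : ℝ) (hQ : 1 ≤ Q) :
    ∃ R₀ : ℝ, 0 ≤ R₀ ∧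
      ∀ (a b c : ℤ), a ≤ b → b ≤ c → ∀ f : ℤ → ℝ,
        (∀ s t : ℤ, a ≤ s → s ≤ t → t ≤ c →
          |(s : ℝ) - (t : ℝ)| / Q - Q ≤ |f s - f t| ∧
          |f s - f t| ≤ Q * |(s : ℝ) - (t : ℝ)| + Q) →
        |f a - f b| + |f b - f c| ≤ |f a - f c| + R₀ := by
  have hQ0 : (0 : ℝ) < Q := by linarith
  have hD : (0 : ℝ) ≤ 10 * Q ^ 3 + 6 * Q := by positivity
  refine ⟨2 * (10 * Q ^ 3 + 6 * Q), by linarith, ?_⟩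
  intro a b c hab hbc f hf
  have h1 := quasi_upper_aux Q hQ a b c hab hbc f hf
  have hf' : ∀ s t : ℤ, a ≤ s → s ≤ t → t ≤ c →
      |(s : ℝ) - (t : ℝ)| / Q - Q ≤ |(-f s) - (-f t)| ∧
      |(-f s) - (-f t)| ≤ Q * |(s : ℝ) - (t : ℝ)| + Q := by
    intro s t hs hst ht
    have heq : |(-f s) - (-f t)| = |f s - f t| := by
      rw [show (-f s) - (-f t) = -(f s - f t) by ring, abs_neg]
    rw [heq]; exact hf s t hs hst ht
  have h2 := quasi_upper_aux Q hQ a b c hab hbc (fun z => -f z) hf'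
  simp only [max_neg_neg] at h2
  have h2' : min (f a) (f c) - (10 * Q ^ 3 + 6 * Q) ≤ f b := by linarith
  rcases max_cases (f a) (f c) with ⟨hm, _⟩ | ⟨hm, _⟩ <;>
  rcases min_cases (f a) (f c) with ⟨hn, _⟩ | ⟨hn, _⟩ <;>
  rw [hm] at h1 <;> rw [hn] at h2' <;>
  rcases abs_cases (f a - f b) with ⟨e1, _⟩ | ⟨e1, _⟩ <;>
  rcases abs_cases (f b - f c) with ⟨e2, _⟩ | ⟨e2, _⟩ <;>
  rcases abs_cases (f a - f c) with ⟨e3, _⟩ | ⟨e3, _⟩ <;>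
  rw [e1, e2, e3] <;> linarith [hD]
end
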